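/- arXiv:2001.07887 — 6 statements merged into one kernel-verified Lean document; each statement's English description precedes it below -/
import Mathlib

section
/- Let t, d : Fin n → ℕ be processing times and deadlines of n jobs run on a single machine, and let σ be a permutation of Fin n that is feasible, i.e. for every position k, the partial sum ∑_{i ≤ k} t (σ i) is at most d (σ k). If k is a position with k + 1 < n and d (σ k) ≥ d (σ (k+1)), then the permutation obtained from σ by swapping the jobs in positions k and k+1 is also feasible. -/
open Finset

/-- If a single-machine schedule `σ` is feasible and position `k` has a deadline at least
that of position `k+1`, then swapping the jobs in positions `k` and `k+1` keeps the
schedule feasible. -/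
theorem swap_adjacent_feasible (n : ℕ) (t d : Fin n → ℕ) (σ : Equiv.Perm (Fin n))
    (hfeas : ∀ k : Fin n, ∑ i ∈ Finset.Iic k, t (σ i) ≤ d (σ k))
    (k : Fin n) (hk : (k : ℕ) + 1 < n)
    (hd : d (σ ⟨(k : ℕ) + 1, hk⟩) ≤ d (σ k)) :
    ∀ k' : Fin n,
      ∑ i ∈ Finset.Iic k', t ((σ * Equiv.swap k ⟨(k : ℕ) + 1, hk⟩) i)
        ≤ d ((σ * Equiv.swap k ⟨(k : ℕ) + 1, hk⟩) k') := by
  intro k'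
  set k1 : Fin n := ⟨(k : ℕ) + 1, hk⟩ with hk1
  have hkk1 : k < k1 := by simp [hk1, Fin.lt_def]
  have hne : k ≠ k1 := ne_of_lt hkk1
  rcases lt_trichotomy k' k with hlt | heq | hgt
  · -- k' < k : swap does nothing on Iic k'
    have hsum : ∑ i ∈ Finset.Iic k', t ((σ * Equiv.swap k k1) i)
        = ∑ i ∈ Finset.Iic k', t (σ i) := by
      refine Finset.sum_congr rfl fun i hi => ?_
      have hik : i ≠ k := ne_of_lt (lt_of_le_of_lt (Finset.mem_Iic.mp hi) hlt)
      have hik1 : i ≠ k1 := ne_of_lt (lt_trans (lt_of_le_of_lt (Finset.mem_Iic.mp hi) hlt) hkk1)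
      simp [Equiv.swap_apply_of_ne_of_ne hik hik1]
    have hk' : (σ * Equiv.swap k k1) k' = σ k' := by
      have h1 : k' ≠ k := ne_of_lt hlt
      have h2 : k' ≠ k1 := ne_of_lt (lt_trans hlt hkk1)
      simp [Equiv.swap_apply_of_ne_of_ne h1 h2]
    rw [hsum, hk']
    exact hfeas k'
  · subst heq
    have htgt : (σ * Equiv.swap k' k1) k' = σ k1 := by simp
    rw [htgt]
    -- sum over Iic k' with swap ≤ sum over Iic k1 without swap
    have hinj : Set.InjOn (Equiv.swap k' k1) (Finset.Iic k') := fun a _ b _ h =>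
      (Equiv.swap k' k1).injective h
    have hsum : ∑ i ∈ Finset.Iic k', t ((σ * Equiv.swap k' k1) i)
        = ∑ j ∈ (Finset.Iic k').image (Equiv.swap k' k1), t (σ j) := by
      rw [Finset.sum_image (fun a ha b hb h => (Equiv.swap k' k1).injective h)]
      rfl
    rw [hsum]
    have hsubset : (Finset.Iic k').image (Equiv.swap k' k1) ⊆ Finset.Iic k1 := by
      intro j hj
      rcases Finset.mem_image.mp hj with ⟨i, hi, rfl⟩
      rcases eq_or_ne i k' with rfl | hik
      · simp [Finset.mem_Iic]
      · have hik1 : i ≠ k1 := ne_of_lt (lt_trans (lt_of_le_of_ne (Finset.mem_Iic.mp hi) hik) hkk1)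
        rw [Equiv.swap_apply_of_ne_of_ne hik hik1]
        exact Finset.mem_Iic.mpr (le_of_lt (lt_of_le_of_lt (Finset.mem_Iic.mp hi) hkk1))
    calc ∑ j ∈ (Finset.Iic k').image (Equiv.swap k' k1), t (σ j)
        ≤ ∑ j ∈ Finset.Iic k1, t (σ j) :=
          Finset.sum_le_sum_of_subset hsubset
      _ ≤ d (σ k1) := hfeas k1
  · -- k < k', hence k1 ≤ k'
    have hk1le : k1 ≤ k' := by
      have : (k : ℕ) < (k' : ℕ) := hgt
      exact Fin.le_def.mpr (by simpa [hk1] using this)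
    -- swap permutes Iic k'
    have hsum : ∑ i ∈ Finset.Iic k', t ((σ * Equiv.swap k k1) i)
        = ∑ i ∈ Finset.Iic k', t (σ i) := by
      refine Finset.sum_nbij' (fun i => Equiv.swap k k1 i) (fun i => Equiv.swap k k1 i)
        ?_ ?_ ?_ ?_ ?_
      all_goals intro i hi
      · rcases eq_or_ne i k with rfl | h1
        · simpa [Finset.mem_Iic] using hk1le
        rcases eq_or_ne i k1 with rfl | h2
        · simp only [Equiv.swap_apply_right]
          exact Finset.mem_Iic.mpr (le_of_lt hgt)
        · simpa [Equiv.swap_apply_of_ne_of_ne h1 h2] using hi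
      · rcases eq_or_ne i k with rfl | h1
        · simpa [Finset.mem_Iic] using hk1le
        rcases eq_or_ne i k1 with rfl | h2
        · simp only [Equiv.swap_apply_right]
          exact Finset.mem_Iic.mpr (le_of_lt hgt)
        · simpa [Equiv.swap_apply_of_ne_of_ne h1 h2] using hi
      · simp
      · simp
      · simp
    rw [hsum]
    rcases eq_or_ne k' k1 with heq' | hne'
    · have h2 : (σ * Equiv.swap k k1) k' = σ k := by simp [heq']
      rw [h2, heq']
      exact le_trans (hfeas k1) hd
    · have h1 : k' ≠ k := ne_of_gt hgt
      have : (σ * Equiv.swap k k1) k' = σ k' := by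
        simp [Equiv.swap_apply_of_ne_of_ne h1 hne']
      rw [this]
      exact hfeas k'
end

section
/- (Jackson's rule, single machine) Let t, d : Fin n → ℕ be processing times and deadlines of n jobs run on a single machine. If there exists a feasible permutation of the jobs, then every permutation τ that orders the jobs by nondecreasing deadline (i.e. d (τ i) ≤ d (τ j) whenever i ≤ j) is feasible. -/
open Finset

/-- Jackson's rule on a single machine: if some permutation of the jobs is feasible,
then every permutation ordering the jobs by nondecreasing deadline is feasible. -/
theorem jackson_single_machine (n : ℕ) (t d : Fin n → ℕ)
    (h : ∃ σ : Equiv.Perm (Fin n), ∀ k : Fin n, ∑ i ∈ Finset.Iic k, t (σ i) ≤ d (σ k))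
    (τ : Equiv.Perm (Fin n)) (hτ : ∀ i j : Fin n, i ≤ j → d (τ i) ≤ d (τ j)) :
    ∀ k : Fin n, ∑ i ∈ Finset.Iic k, t (τ i) ≤ d (τ k) := by
  obtain ⟨σ, hσ⟩ := h
  intro k
  set S : Finset (Fin n) := (Finset.Iic k).image τ with hS
  set P : Finset (Fin n) := S.image σ.symm with hP
  have hPcard : P.card = k + 1 := by
    rw [hP, hS, Finset.card_image_of_injective _ σ.symm.injective,
      Finset.card_image_of_injective _ τ.injective, Fin.card_Iic]
  have hPne : P.Nonempty := by
    rw [← Finset.card_pos, hPcard]; omega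
  set p := P.max' hPne with hp
  have hsub : P ⊆ Finset.Iic p := fun x hx => Finset.mem_Iic.mpr (P.le_max' x hx)
  have hkp : (k : ℕ) ≤ (p : ℕ) := by
    have := Finset.card_le_card hsub
    rw [hPcard, Fin.card_Iic] at this
    omega
  have hpm : σ p ∈ S := by
    have hmem : p ∈ P := P.max'_mem hPne
    rw [hP] at hmem
    obtain ⟨j, hj, hje⟩ := Finset.mem_image.mp hmem
    rw [← hje, Equiv.apply_symm_apply]; exact hj
  obtain ⟨i, hi, hie⟩ := Finset.mem_image.mp hpm
  calc ∑ i ∈ Finset.Iic k, t (τ i)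
      = ∑ j ∈ S, t j := (Finset.sum_image (fun a _ b _ hab => τ.injective hab)).symm
    _ = ∑ q ∈ P, t (σ q) := by
        rw [hP, Finset.sum_image (fun a _ b _ hab => σ.symm.injective hab)]
        exact Finset.sum_congr rfl fun j _ => by rw [Equiv.apply_symm_apply]
    _ ≤ ∑ q ∈ Finset.Iic p, t (σ q) := Finset.sum_le_sum_of_subset hsub
    _ ≤ d (σ p) := hσ p
    _ = d (τ i) := by rw [hie]
    _ ≤ d (τ k) := hτ i k (Finset.mem_Iic.mp hi)
end

section
/- (Jackson's rule per machine, identical machines) Let t, d : Fin n → ℕ be processing times and deadlines of n jobs on m identical machines. If some schedule with job-to-machine assignment a : Fin n → Fin m is feasible, then the schedule with the same assignment a in which each machine processes its assigned jobs in nondecreasing order of deadline is also feasible; equivalently, if the instance is feasible at all, it is feasible by a schedule in which, for every job j, ∑_{k : a k = a j, d k ≤ d j (ties broken by index)} t k ≤ d j. -/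
open Finset

/-- Jackson's rule per machine, identical machines: if the assignment `a` admits a
feasible ordering (encoded by a global processing order `σ`), then processing each
machine's jobs in nondecreasing order of deadline (ties broken by index) is feasible. -/
theorem jackson_per_machine (n m : ℕ) (t d : Fin n → ℕ) (a : Fin n → Fin m)
    (h : ∃ σ : Equiv.Perm (Fin n),
        ∀ j, ∑ k ∈ univ.filter (fun k => a k = a j ∧ σ k ≤ σ j), t k ≤ d j) :
    ∀ j, ∑ k ∈ univ.filter
        (fun k => a k = a j ∧ (d k < d j ∨ (d k = d j ∧ k ≤ j))), t k ≤ d j := by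
  obtain ⟨σ, hσ⟩ := h
  intro j
  set S := univ.filter (fun k => a k = a j ∧ (d k < d j ∨ (d k = d j ∧ k ≤ j))) with hS
  have hjS : j ∈ S := by simp [hS]
  obtain ⟨j', hj'S, hmax⟩ := S.exists_max_image σ ⟨j, hjS⟩
  have hj'' := Finset.mem_filter.mp hj'S
  have haj' : a j' = a j := hj''.2.1
  have hdj' : d j' ≤ d j := by
    rcases hj''.2.2 with h1 | h2
    · exact h1.le
    · exact h2.1.le
  calc ∑ k ∈ S, t k
      ≤ ∑ k ∈ univ.filter (fun k => a k = a j' ∧ σ k ≤ σ j'), t k := by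
        apply Finset.sum_le_sum_of_subset
        intro k hk
        have hk' := Finset.mem_filter.mp hk
        simp only [Finset.mem_filter, Finset.mem_univ, true_and]
        exact ⟨hk'.2.1.trans haj'.symm, hmax k hk⟩
    _ ≤ d j' := hσ j'
    _ ≤ d j := hdj'
end

section
/- (Jackson's rule per machine, related machines) Let t : Fin n → ℕ be work amounts and d : Fin n → ℚ deadlines of n jobs, and let λ : Fin m → ℚ with λ μ > 0 be the time each machine μ takes per unit of work, so a job of work t j on machine μ takes λ μ * t j time. If some schedule with job-to-machine assignment a : Fin n → Fin m is feasible, then the schedule with the same assignment in which each machine processes its assigned jobs in nondecreasing order of deadline is also feasible. -/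
open Finset

/-- Jackson's rule per machine for related machines: machine `μ` takes `lam μ > 0` time per
unit of work.  If the assignment `a` admits a feasible ordering (encoded by a global
processing order `σ`), then processing each machine's jobs in nondecreasing order of
deadline (ties broken by index) is feasible. -/
theorem jackson_per_machine_related (n m : ℕ) (t : Fin n → ℕ) (d : Fin n → ℚ)
    (lam : Fin m → ℚ) (hlam : ∀ μ, 0 < lam μ) (a : Fin n → Fin m)
    (h : ∃ σ : Equiv.Perm (Fin n),
        ∀ j, lam (a j) *
          ∑ k ∈ univ.filter (fun k => a k = a j ∧ σ k ≤ σ j), (t k : ℚ) ≤ d j) :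
    ∀ j, lam (a j) *
        ∑ k ∈ univ.filter
          (fun k => a k = a j ∧ (d k < d j ∨ (d k = d j ∧ k ≤ j))), (t k : ℚ) ≤ d j := by
  obtain ⟨σ, hσ⟩ := h
  intro j
  set S : Finset (Fin n) :=
    univ.filter (fun k => a k = a j ∧ (d k < d j ∨ (d k = d j ∧ k ≤ j))) with hS
  have hjS : j ∈ S := by simp [hS]
  obtain ⟨k, hkS, hkmax⟩ := S.exists_max_image σ ⟨j, hjS⟩
  have hk := Finset.mem_filter.mp hkS
  have hak : a k = a j := hk.2.1
  have hdk : d k ≤ d j := by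
    rcases hk.2.2 with h' | h'
    · exact le_of_lt h'
    · exact le_of_eq h'.1
  have hsub : S ⊆ univ.filter (fun l => a l = a k ∧ σ l ≤ σ k) := by
    intro l hl
    have hl' := Finset.mem_filter.mp hl
    exact Finset.mem_filter.mpr ⟨Finset.mem_univ _, by rw [hak]; exact hl'.2.1,
      hkmax l hl⟩
  have hsum : (∑ l ∈ S, (t l : ℚ)) ≤
      ∑ l ∈ univ.filter (fun l => a l = a k ∧ σ l ≤ σ k), (t l : ℚ) :=
    Finset.sum_le_sum_of_subset_of_nonneg hsub (fun i _ _ => by positivity)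
  calc lam (a j) * ∑ l ∈ S, (t l : ℚ)
      ≤ lam (a j) * ∑ l ∈ univ.filter (fun l => a l = a k ∧ σ l ≤ σ k), (t l : ℚ) :=
        mul_le_mul_of_nonneg_left hsum (le_of_lt (hlam _))
    _ = lam (a k) * ∑ l ∈ univ.filter (fun l => a l = a k ∧ σ l ≤ σ k), (t l : ℚ) := by
        rw [hak]
    _ ≤ d k := hσ k
    _ ≤ d j := hdk
end

section
/- (Correctness of the two-machine DP recurrence) Let t, d : Fin n → ℕ with d nondecreasing (d i ≤ d j whenever i ≤ j). For 0 ≤ i ≤ n and s ∈ ℕ, let F i s denote the proposition: there exists an assignment a of the first i jobs (indices 0,…,i−1) to two machines such that the total processing time of jobs assigned to machine 0 equals s, and for every job j < i, ∑_{k ≤ j, a k = a j} t k ≤ d j. Then for every 1 ≤ i ≤ n and every s ∈ ℕ: F i s holds if and only if either (t (i−1) ≤ s and s ≤ d (i−1) and F (i−1) (s − t (i−1))), or (F (i−1) s and (∑_{j < i} t j) − s ≤ d (i−1)). -/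
/-!
Job `i - 1` is the last of the first `i` jobs on whichever machine it is assigned to, so its
completion time is the whole load of that machine among the first `i` jobs: `s` on machine `0`,
and the total processing time minus `s` on machine `1`. The completion times of the earlier jobs
do not depend on where job `i - 1` goes. Hence the feasible assignments of the first `i` jobs are
exactly the feasible assignments of the first `i - 1` jobs, extended by a machine for job `i - 1`
on which it meets its deadline.
-/

open Finset

/-- `F n t d i s`: there is an assignment of the first `i` jobs (indices `< i`) to two
machines such that the total processing time of jobs assigned to machine `0` is exactly `s`,
and each of the first `i` jobs (processed in increasing index order on its machine)
finishes by its deadline. -/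
def F (n : ℕ) (t d : Fin n → ℕ) (i s : ℕ) : Prop :=
  ∃ a : Fin n → Fin 2,
    (∑ k ∈ univ.filter (fun k : Fin n => (k : ℕ) < i ∧ a k = 0), t k) = s ∧
    ∀ j : Fin n, (j : ℕ) < i →
      ∑ k ∈ univ.filter (fun k => k ≤ j ∧ a k = a j), t k ≤ d j

namespace TwoMachine

variable {n : ℕ} (t : Fin n → ℕ)

def load (a : Fin n → Fin 2) (m : ℕ) (c : Fin 2) : ℕ :=
  ∑ k ∈ univ.filter (fun k : Fin n => (k : ℕ) < m ∧ a k = c), t k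

lemma load_congr {a b : Fin n → Fin 2} {m : ℕ} (h : ∀ k : Fin n, (k : ℕ) < m → a k = b k)
    (c : Fin 2) : load t a m c = load t b m c :=
  sum_congr (filter_congr fun k _ => and_congr_right fun hk => by rw [h k hk]) fun _ _ => rfl

lemma load_succ (a : Fin n → Fin 2) (j : Fin n) (c : Fin 2) :
    load t a (j + 1) c = load t a j c + if a j = c then t j else 0 := by
  have hsplit : ∀ k : Fin n, (if (k : ℕ) < j + 1 ∧ a k = c then t k else 0) =
      (if (k : ℕ) < j ∧ a k = c then t k else 0) +
        if j = k then (if a j = c then t j else 0) else 0 := by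
    intro k
    rcases eq_or_ne j k with rfl | hjk
    · simp
    · have : (k : ℕ) < j + 1 ↔ (k : ℕ) < j := by have := Fin.val_ne_of_ne hjk; omega
      simp [this, hjk]
  simp only [load, sum_filter, hsplit, sum_add_distrib, sum_ite_eq, mem_univ, if_true]

lemma load_zero_add_load_one (a : Fin n → Fin 2) (m : ℕ) :
    load t a m 0 + load t a m 1 = ∑ k ∈ univ.filter (fun k : Fin n => (k : ℕ) < m), t k := by
  have hsplit : ∀ k : Fin n, (if (k : ℕ) < m ∧ a k = 0 then t k else 0) +
      (if (k : ℕ) < m ∧ a k = 1 then t k else 0) = if (k : ℕ) < m then t k else 0 := by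
    intro k
    obtain h | h : a k = 0 ∨ a k = 1 := by omega
    all_goals simp [h]
  simp only [load, sum_filter, ← sum_add_distrib, hsplit]

lemma sum_filter_le_eq_load (a : Fin n → Fin 2) (j : Fin n) (c : Fin 2) :
    ∑ k ∈ univ.filter (fun k => k ≤ j ∧ a k = c), t k = load t a (j + 1) c := by
  simp only [load, Fin.le_def, Nat.lt_succ_iff]


variable (d : Fin n → ℕ)

def Feasible (a : Fin n → Fin 2) (i : ℕ) : Prop :=
  ∀ j : Fin n, (j : ℕ) < i → load t a (j + 1) (a j) ≤ d j

lemma F_iff_exists_feasible {i s : ℕ} :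
    F n t d i s ↔ ∃ a, load t a i 0 = s ∧ Feasible t d a i := by
  simp only [F, Feasible, load, sum_filter_le_eq_load]

lemma feasible_succ_iff {a : Fin n → Fin 2} {j : Fin n} :
    Feasible t d a (j + 1) ↔ Feasible t d a j ∧ load t a (j + 1) (a j) ≤ d j := by
  refine ⟨fun h => ⟨fun k hk => h k (by omega), h j (by omega)⟩, fun ⟨h, hj⟩ k hk => ?_⟩
  rcases (Nat.lt_succ_iff_lt_or_eq.mp hk) with hk | hk
  · exact h k hk
  · rwa [Fin.ext hk]

lemma Feasible.congr {a b : Fin n → Fin 2} {i : ℕ} (h : ∀ k : Fin n, (k : ℕ) < i → a k = b k)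
    (ha : Feasible t d a i) : Feasible t d b i := fun j hj => by
  rw [← h j hj, ← load_congr t fun k hk => h k (by omega)]
  exact ha j hj

lemma update_eq_of_lt (a : Fin n → Fin 2) {j k : Fin n} (hk : (k : ℕ) < j) (c : Fin 2) :
    Function.update a j c k = a k :=
  Function.update_of_ne (Fin.ne_of_lt hk) c a

lemma load_update_succ (a : Fin n → Fin 2) (j : Fin n) (c c' : Fin 2) :
    load t (Function.update a j c) (j + 1) c' = load t a j c' + if c = c' then t j else 0 := by
  rw [load_succ, Function.update_self, load_congr t fun k hk => update_eq_of_lt a hk c]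

lemma Feasible.update {a : Fin n → Fin 2} {j : Fin n} (ha : Feasible t d a j) (c : Fin 2) :
    Feasible t d (Function.update a j c) j :=
  ha.congr t d fun _ hk => (update_eq_of_lt a hk c).symm

lemma F_succ_iff (j : Fin n) (s : ℕ) :
    F n t d (j + 1) s ↔
      (t j ≤ s ∧ s ≤ d j ∧ F n t d j (s - t j)) ∨
        (F n t d j s ∧ (∑ k ∈ univ.filter (fun k : Fin n => (k : ℕ) < j + 1), t k) - s ≤ d j) := by
  simp only [F_iff_exists_feasible, feasible_succ_iff]
  have h10 : (1 : Fin 2) ≠ 0 := by decide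
  constructor
  · rintro ⟨a, rfl, ha, hj⟩
    have htot := load_zero_add_load_one t a (j + 1)
    obtain h | h : a j = 0 ∨ a j = 1 := by omega
    · simp only [h, load_succ, if_true] at hj htot ⊢
      exact Or.inl ⟨by omega, hj, a, by omega, ha⟩
    · simp only [h, h10, load_succ, if_false, add_zero] at hj htot ⊢
      exact Or.inr ⟨⟨a, rfl, ha⟩, by omega⟩
  · rintro (⟨hts, hsd, a, ha0, ha⟩ | ⟨⟨a, ha0, ha⟩, hd⟩)
    · refine ⟨Function.update a j 0, ?_, ha.update t d 0, ?_⟩ <;>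
        simp only [load_update_succ, Function.update_self, ha0, if_true] <;> omega
    · have htot := load_zero_add_load_one t (Function.update a j 1) (j + 1)
      refine ⟨Function.update a j 1, ?_, ha.update t d 1, ?_⟩ <;>
        simp only [load_update_succ, Function.update_self, ha0, h10, if_true, if_false]
          at htot ⊢ <;> omega

end TwoMachine

/-- Correctness of the two-machine DP recurrence. -/
theorem two_machine_dp_recurrence (n : ℕ) (t d : Fin n → ℕ)
    (i : ℕ) (hi1 : 1 ≤ i) (hin : i ≤ n) (s : ℕ) :
    F n t d i s ↔
      ((t ⟨i - 1, by omega⟩ ≤ s ∧ s ≤ d ⟨i - 1, by omega⟩ ∧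
          F n t d (i - 1) (s - t ⟨i - 1, by omega⟩)) ∨
       (F n t d (i - 1) s ∧
          (∑ j ∈ univ.filter (fun j : Fin n => (j : ℕ) < i), t j) - s ≤ d ⟨i - 1, by omega⟩)) := by
  obtain ⟨m, rfl⟩ : ∃ m, i = m + 1 := ⟨i - 1, by omega⟩
  exact TwoMachine.F_succ_iff t d ⟨m, by omega⟩ s
end

section
/- (Two-machine feasibility via the DP) Let t, d : Fin n → ℕ with d nondecreasing. With F as above, the full instance admits a feasible schedule on 2 identical machines if and only if there exists s ≤ ∑_{j < n} t j with F n s. -/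
open Finset

/-- Two-machine feasibility via the DP: the instance (with `d` nondecreasing) admits a
feasible schedule on 2 identical machines iff `F n s` holds for some `s` at most the
total processing time. -/
theorem two_machine_feasibility (n : ℕ) (t d : Fin n → ℕ) (hd : Monotone d) :
    (∃ (a : Fin n → Fin 2) (σ : Equiv.Perm (Fin n)),
        ∀ j, ∑ k ∈ univ.filter (fun k => a k = a j ∧ σ k ≤ σ j), t k ≤ d j) ↔
      (∃ s ≤ ∑ j, t j, F n t d n s) := by
  constructor
  · rintro ⟨a, σ, h⟩
    refine ⟨∑ k ∈ univ.filter (fun k : Fin n => (k : ℕ) < n ∧ a k = 0), t k, ?_, a, rfl, ?_⟩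
    · exact Finset.sum_le_sum_of_subset (Finset.filter_subset _ _)
    · intro j _
      set S : Finset (Fin n) := univ.filter (fun k => k ≤ j ∧ a k = a j) with hS
      have hjS : j ∈ S := by simp [hS]
      obtain ⟨m, hmS, hmax⟩ := Finset.exists_max_image S (fun k => σ k) ⟨j, hjS⟩
      have hm : m ≤ j ∧ a m = a j := by simpa [hS] using hmS
      have hsub : S ⊆ univ.filter (fun k => a k = a m ∧ σ k ≤ σ m) := by
        intro k hk
        have hk' : k ≤ j ∧ a k = a j := by simpa [hS] using hk
        simp only [Finset.mem_filter, Finset.mem_univ, true_and]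
        exact ⟨hk'.2.trans hm.2.symm, hmax k hk⟩
      calc ∑ k ∈ S, t k ≤ ∑ k ∈ univ.filter (fun k => a k = a m ∧ σ k ≤ σ m), t k :=
            Finset.sum_le_sum_of_subset hsub
        _ ≤ d m := h m
        _ ≤ d j := hd hm.1
  · rintro ⟨s, _, a, _, hfeas⟩
    refine ⟨a, 1, fun j => ?_⟩
    have := hfeas j j.isLt
    calc ∑ k ∈ univ.filter (fun k => a k = a j ∧ (1 : Equiv.Perm (Fin n)) k ≤ (1 : Equiv.Perm (Fin n)) j), t k
        = ∑ k ∈ univ.filter (fun k => k ≤ j ∧ a k = a j), t k := by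
          apply Finset.sum_congr _ (fun _ _ => rfl)
          apply Finset.filter_congr
          intro k _
          simp [and_comm]
      _ ≤ d j := this
end
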